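/- arXiv:2210.11183 — 5 statements merged into one kernel-verified Lean document; each statement's English description precedes it below -/
import Mathlib

section
/- For 0 < p < ∞, a family W of finite nonempty subsets of ℤ, and a complex sequence a = (a_k)_{k∈ℤ}, the quantity sup_{n∈ℕ} n^{1/p} · sup_{e∈W, |e|≥n} (1/|e|) |Σ_{j∈e} a_j| equals sup_{e∈W} |e|^{-1/p'} |Σ_{k∈e} a_k|, where 1/p' = 1 - 1/p. -/
open ENNReal

lemma key_rpow (c : ℝ≥0∞) (hc0 : c ≠ 0) (hct : c ≠ ⊤) (x : ℝ≥0∞) (p : ℝ) :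
    c ^ (1 / p) * (x / c) = x / c ^ (1 - 1 / p) := by
  rw [div_eq_mul_inv x c, div_eq_mul_inv x (c ^ (1 - 1 / p)), ← ENNReal.rpow_neg, neg_sub,
    show (1 / p - 1 : ℝ) = 1 / p + (-1) by ring, ENNReal.rpow_add _ _ hc0 hct,
    ENNReal.rpow_neg_one]
  ring

/-- For `0 < p < ∞`, a family `W` of finite nonempty subsets of `ℤ`, and a
complex sequence `a`, `sup_{n∈ℕ, n≥1} n^{1/p} · sup_{e∈W, |e|≥n} (1/|e|) |Σ_{j∈e} a_j|`
equals `sup_{e∈W} |e|^{-1/p'} |Σ_{k∈e} a_k|`, where `1/p' = 1 - 1/p`. -/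
theorem discrete_net_norm_pinfty_eq (p : ℝ) (hp : 0 < p)
    (W : Set (Finset ℤ)) (hW : ∀ e ∈ W, e.Nonempty) (a : ℤ → ℂ) :
    (⨆ (n : ℕ) (_ : 1 ≤ n),
        (n : ℝ≥0∞) ^ (1 / p) *
          ⨆ (e : Finset ℤ) (_ : e ∈ W) (_ : n ≤ e.card),
            ENNReal.ofReal ‖∑ j ∈ e, a j‖ / (e.card : ℝ≥0∞)) =
      ⨆ (e : Finset ℤ) (_ : e ∈ W),
        ENNReal.ofReal ‖∑ k ∈ e, a k‖ / (e.card : ℝ≥0∞) ^ (1 - 1 / p) := by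
  apply le_antisymm
  · refine iSup₂_le fun n hn => ?_
    rw [ENNReal.mul_iSup]
    refine iSup_le fun e => ?_
    rw [ENNReal.mul_iSup]
    refine iSup_le fun he => ?_
    rw [ENNReal.mul_iSup]
    refine iSup_le fun hcard => ?_
    have hc0 : (e.card : ℝ≥0∞) ≠ 0 := by
      simp [Finset.card_eq_zero]
      exact (hW e he).ne_empty
    have hct : (e.card : ℝ≥0∞) ≠ ⊤ := by simp
    calc (n : ℝ≥0∞) ^ (1 / p) * (ENNReal.ofReal ‖∑ j ∈ e, a j‖ / (e.card : ℝ≥0∞))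
        ≤ (e.card : ℝ≥0∞) ^ (1 / p) * (ENNReal.ofReal ‖∑ j ∈ e, a j‖ / (e.card : ℝ≥0∞)) := by
          exact mul_le_mul_left
            (ENNReal.rpow_le_rpow (by exact_mod_cast hcard) (by positivity)) _
      _ = ENNReal.ofReal ‖∑ j ∈ e, a j‖ / (e.card : ℝ≥0∞) ^ (1 - 1 / p) :=
          key_rpow _ hc0 hct _ _
      _ ≤ _ := le_iSup₂ (f := fun (e : Finset ℤ) (_ : e ∈ W) =>
            ENNReal.ofReal ‖∑ k ∈ e, a k‖ / (e.card : ℝ≥0∞) ^ (1 - 1 / p)) e he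
  · refine iSup₂_le fun e he => ?_
    have hcard : 1 ≤ e.card := (hW e he).card_pos
    have hc0 : (e.card : ℝ≥0∞) ≠ 0 := by
      simp [Finset.card_eq_zero]
      exact (hW e he).ne_empty
    have hct : (e.card : ℝ≥0∞) ≠ ⊤ := by simp
    rw [← key_rpow _ hc0 hct]
    refine le_trans ?_ (le_iSup₂ (f := fun (n : ℕ) (_ : 1 ≤ n) =>
      (n : ℝ≥0∞) ^ (1 / p) *
        ⨆ (e : Finset ℤ) (_ : e ∈ W) (_ : n ≤ e.card),
          ENNReal.ofReal ‖∑ j ∈ e, a j‖ / (e.card : ℝ≥0∞)) e.card hcard)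
    gcongr
    exact le_iSup₂_of_le e he (le_iSup_of_le le_rfl le_rfl)
end

section
/- Let r > 0 and let λ : ℝ → ℝ be the even function with λ(ξ) = (ξ - 2^k)^{-1/r} for ξ ∈ (2^k, 2^{k+1}) and k ∈ ℤ. Then the distribution function d_λ(σ) := |{x : |λ(x)| > σ}| is infinite for every σ > 0, hence ‖λ‖_{L_{r,∞}(ℝ)} = ∞. -/
open MeasureTheory ENNReal Set

/-- Non-increasing rearrangement of `g : ℝ → ℝ` (valued in `ℝ≥0∞`). -/
noncomputable def rearr (g : ℝ → ℝ) (t : ℝ) : ℝ≥0∞ :=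
  sInf {σ : ℝ≥0∞ | volume {x : ℝ | σ < ENNReal.ofReal |g x|} ≤ ENNReal.ofReal t}

/-- if `λ` is even and `λ(ξ) = (ξ - 2^k)^{-1/r}` on every dyadic interval
`(2^k, 2^{k+1})`, then `d_λ(σ) = ∞` for every `σ > 0`, hence `‖λ‖_{L_{r,∞}(ℝ)} = ∞`. -/
theorem example_weak_Lr_infinite (r : ℝ) (hr : 0 < r) (lam : ℝ → ℝ)
    (heven : ∀ ξ : ℝ, lam (-ξ) = lam ξ)
    (hlam : ∀ k : ℤ, ∀ ξ ∈ Ioo ((2 : ℝ) ^ k) ((2 : ℝ) ^ (k + 1)),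
      lam ξ = (ξ - 2 ^ k) ^ (-(1 / r))) :
    (∀ σ : ℝ, 0 < σ → volume {x : ℝ | σ < |lam x|} = ∞) ∧
      (⨆ (t : ℝ) (_ : 0 < t), ENNReal.ofReal (t ^ (1 / r)) * rearr lam t) = ∞ := by
  have hvol : ∀ σ : ℝ, 0 < σ → volume {x : ℝ | σ < |lam x|} = ∞ := by
    intro σ hσ
    set c : ℝ := σ ^ (-r) with hc
    have hcpos : 0 < c := Real.rpow_pos_of_pos hσ _
    set ε : ℝ := min c 1 with hε
    have hεpos : 0 < ε := lt_min hcpos one_pos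
    have hεc : ε ≤ c := min_le_left _ _
    have hε1 : ε ≤ 1 := min_le_right _ _
    set S : ℕ → Set ℝ := fun n => Ioo ((2 : ℝ) ^ n) ((2 : ℝ) ^ n + ε) with hS
    have h2n : ∀ n : ℕ, (1 : ℝ) ≤ 2 ^ n := fun n => one_le_pow₀ (by norm_num)
    have hsub : ∀ n : ℕ, S n ⊆ {x : ℝ | σ < |lam x|} := by
      intro n x hx
      have hx1 : (2 : ℝ) ^ n < x := hx.1
      have hx2 : x < 2 ^ n + ε := hx.2
      have hxlt : x < (2 : ℝ) ^ (n + 1) := by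
        have : (2 : ℝ) ^ n + ε ≤ 2 ^ (n + 1) := by
          rw [pow_succ]
          nlinarith [h2n n]
        linarith
      have hmem : x ∈ Ioo ((2 : ℝ) ^ (n : ℤ)) ((2 : ℝ) ^ ((n : ℤ) + 1)) := by
        constructor
        · rw [zpow_natCast]; exact hx1
        · have : ((n : ℤ) + 1) = ((n + 1 : ℕ) : ℤ) := by push_cast; ring
          rw [this, zpow_natCast]; exact hxlt
      have hval := hlam n x hmem
      rw [zpow_natCast] at hval
      have hd : 0 < x - 2 ^ n := by linarith
      have hpos : 0 < (x - 2 ^ n) ^ (-(1 / r)) := Real.rpow_pos_of_pos hd _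
      have hσeq : σ = c ^ (-(1 / r)) := by
        rw [hc, ← Real.rpow_mul hσ.le,
          show (-r) * (-(1 / r)) = 1 by field_simp, Real.rpow_one]
      have hlt : c ^ (-(1 / r)) < (x - 2 ^ n) ^ (-(1 / r)) := by
        apply Real.rpow_lt_rpow_of_neg hd (by linarith) (neg_lt_zero.mpr (by positivity))
      show σ < |lam x|
      rw [hval, abs_of_pos hpos, hσeq]
      exact hlt
    have hdisj : Pairwise (Function.onFun Disjoint S) := by
      have key : ∀ m n : ℕ, m < n → Disjoint (S m) (S n) := by
        intro m n hmn
        rw [Set.disjoint_left]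
        intro x hxm hxn
        have h1 : x < 2 ^ m + ε := hxm.2
        have h2 : (2 : ℝ) ^ n < x := hxn.1
        have h3 : (2 : ℝ) ^ (m + 1) ≤ 2 ^ n := pow_le_pow_right₀ (by norm_num) hmn
        have : (2 : ℝ) ^ m + ε ≤ 2 ^ (m + 1) := by
          rw [pow_succ]; nlinarith [h2n m]
        linarith
      intro m n hmn
      rcases lt_or_gt_of_ne hmn with h | h
      · exact key m n h
      · exact (key n m h).symm
    have hmeas : ∀ n : ℕ, MeasurableSet (S n) := fun n => measurableSet_Ioo
    have hUnion : volume (⋃ n, S n) = ∞ := by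
      rw [measure_iUnion hdisj hmeas]
      have : ∀ n : ℕ, volume (S n) = ENNReal.ofReal ε := by
        intro n
        rw [hS]; simp [Real.volume_Ioo]
      simp only [this]
      exact ENNReal.tsum_const_eq_top_of_ne_zero (ENNReal.ofReal_pos.mpr hεpos).ne'
    refine top_unique ?_
    rw [← hUnion]
    exact measure_mono (Set.iUnion_subset hsub)
  refine ⟨hvol, ?_⟩
  have hre : rearr lam 1 = ∞ := by
    rw [rearr, sInf_eq_top]
    intro σ hσ
    by_contra hne
    have hσtop : σ ≠ ⊤ := hne
    have hbig : {x : ℝ | max σ.toReal 1 < |lam x|} ⊆ {x : ℝ | σ < ENNReal.ofReal |lam x|} := by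
      intro x hx
      have h1 : σ.toReal < |lam x| := lt_of_le_of_lt (le_max_left _ _) hx
      exact (ENNReal.lt_ofReal_iff_toReal_lt hσtop).mpr h1
    have hvinf : volume {x : ℝ | σ < ENNReal.ofReal |lam x|} = ∞ := by
      refine top_unique ?_
      rw [← hvol (max σ.toReal 1) (lt_of_lt_of_le one_pos (le_max_right _ _))]
      exact measure_mono hbig
    have hσ' : volume {x : ℝ | σ < ENNReal.ofReal |lam x|} ≤ ENNReal.ofReal 1 := hσ
    rw [hvinf] at hσ'
    exact (lt_irrefl _ (lt_of_le_of_lt hσ' ENNReal.ofReal_lt_top)).elim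
  refine top_unique ?_
  have hle : ENNReal.ofReal ((1 : ℝ) ^ (1 / r)) * rearr lam 1 ≤
      ⨆ (t : ℝ) (_ : 0 < t), ENNReal.ofReal (t ^ (1 / r)) * rearr lam t :=
    le_iSup_of_le 1 (le_iSup_of_le one_pos le_rfl)
  refine le_trans (le_of_eq ?_) hle
  rw [hre, Real.one_rpow]
  simp
end

section
/- Let W be the family of all finite (discrete) intervals in ℤ, 1 < r' < ∞, 1/r + 1/r' = 1, and let λ = (λ_k)_{k∈ℤ} be a W-generalized monotone sequence with constant C, i.e. λ_n^* ≤ C · sup_{e∈W, |e|≥n} (1/|e|)|Σ_{j∈e} λ_j| for all n ∈ ℕ. Then for every finite subset e ⊂ ℤ (not necessarily an interval), |e|^{-1/r'} |Σ_{m∈e} λ_m| ≤ C'' · sup_{e'∈W} |e'|^{-1/r'} |Σ_{j∈e'} λ_j|, with C'' depending only on C and r. -/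
/-! Write `p = 1/r'` and let `S` be the supremum on the right. Removing the elements of `e` in
increasing order of `|λ_m|`, the `k`-th largest value is at most `λ_k^*`, so
`|Σ_{m∈e} λ_m| ≤ Σ_{k ≤ |e|} λ_k^*`. An interval `e'` with `|e'| ≥ k` has
`|e'|⁻¹ ≤ |e'|^{-p} k^{p-1}`, so the hypothesis gives `λ_k^* ≤ C S k^{p-1}`; and
`Σ_{k ≤ N} k^{p-1} ≤ N^p / p` by concavity of `t ↦ t^p`. -/

open MeasureTheory ENNReal

/-- Non-increasing rearrangement `a_n^* = inf {σ : #{j : |a_j| > σ} < n}` of a complex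
sequence on `ℤ` (valued in `ℝ≥0∞`), for `n ≥ 1`. -/
noncomputable def srearr (a : ℤ → ℂ) (n : ℕ) : ℝ≥0∞ :=
  sInf {σ : ℝ≥0∞ | Measure.count {j : ℤ | σ < ENNReal.ofReal ‖a j‖} < n}

/-- The family of all finite nonempty discrete intervals in `ℤ`. -/
def ZIntervals : Set (Finset ℤ) := {e | ∃ a b : ℤ, a ≤ b ∧ e = Finset.Icc a b}

open Finset

theorem le_srearr_of_card_le {a : ℤ → ℂ} {n : ℕ} {t : ℝ≥0∞} (s : Finset ℤ) (hs : n ≤ s.card)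
    (ht : ∀ j ∈ s, t ≤ ENNReal.ofReal ‖a j‖) : t ≤ srearr a n := by
  refine le_sInf fun σ hσ => ?_
  by_contra! hσt
  have hsub : (s : Set ℤ) ⊆ {j | σ < ENNReal.ofReal ‖a j‖} := fun j hj => hσt.trans_le (ht j hj)
  have hcount := measure_mono (μ := Measure.count) hsub
  rw [Measure.count_apply_finset] at hcount
  exact (lt_of_le_of_lt (le_trans (by exact_mod_cast hs) hcount) hσ).false

theorem sum_ofReal_norm_le_sum_srearr (a : ℤ → ℂ) (e : Finset ℤ) :
    ∑ m ∈ e, ENNReal.ofReal ‖a m‖ ≤ ∑ i ∈ range e.card, srearr a (i + 1) := by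
  classical
  induction e using Finset.induction_on_min_value (fun j => ‖a j‖) with
  | empty => simp
  | insert j s hj hmin ih =>
    rw [sum_insert hj, card_insert_of_notMem hj, sum_range_succ, add_comm]
    gcongr
    refine le_srearr_of_card_le (insert j s) (card_insert_of_notMem hj).ge fun x hx => ?_
    rcases mem_insert.1 hx with rfl | hx
    · exact le_rfl
    · exact ENNReal.ofReal_le_ofReal (hmin x hx)

theorem Real.mul_add_one_rpow_sub_one_le {p x : ℝ} (hp0 : 0 ≤ p) (hp1 : p ≤ 1) (hx : 0 ≤ x) :
    p * (x + 1) ^ (p - 1) ≤ (x + 1) ^ p - x ^ p := by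
  have hy : 0 < x + 1 := by linarith
  have amgm : x ^ p * (x + 1) ^ (1 - p) ≤ p * x + (1 - p) * (x + 1) :=
    Real.geom_mean_le_arith_mean2_weighted hp0 (by linarith) hx hy.le (by ring)
  have hcancel : (x + 1) ^ (1 - p) * (x + 1) ^ (p - 1) = 1 := by
    rw [← Real.rpow_add hy]; simp
  have hpow : (x + 1) * (x + 1) ^ (p - 1) = (x + 1) ^ p := by
    conv_rhs => rw [show p = 1 + (p - 1) by ring, Real.rpow_add hy, Real.rpow_one]
  have := mul_le_mul_of_nonneg_right amgm (Real.rpow_nonneg hy.le (p - 1))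
  linear_combination this - x ^ p * hcancel + hpow

theorem Real.sum_range_add_one_rpow_sub_one_le {p : ℝ} (hp0 : 0 < p) (hp1 : p ≤ 1) (N : ℕ) :
    ∑ i ∈ range N, ((i : ℝ) + 1) ^ (p - 1) ≤ (N : ℝ) ^ p / p := by
  rw [le_div_iff₀ hp0, sum_mul]
  calc ∑ i ∈ range N, ((i : ℝ) + 1) ^ (p - 1) * p
      ≤ ∑ i ∈ range N, (((i + 1 : ℕ) : ℝ) ^ p - ((i : ℕ) : ℝ) ^ p) := by
        refine sum_le_sum fun i _ => ?_
        push_cast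
        linarith [Real.mul_add_one_rpow_sub_one_le hp0.le hp1 (Nat.cast_nonneg (α := ℝ) i)]
    _ = (N : ℝ) ^ p := by
        rw [sum_range_sub (fun n : ℕ => (n : ℝ) ^ p)]
        simp [Real.zero_rpow hp0.ne']

theorem ENNReal.sum_range_inv_rpow_le {p : ℝ} (hp0 : 0 < p) (hp1 : p ≤ 1) (N : ℕ) :
    ∑ i ∈ range N, (((i + 1 : ℕ) : ℝ≥0∞) ^ (1 - p))⁻¹ ≤
      ENNReal.ofReal (1 / p) * (N : ℝ≥0∞) ^ p := by
  have hterm (n : ℕ) (hn : 0 < n) :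
      (((n : ℝ≥0∞)) ^ (1 - p))⁻¹ = ENNReal.ofReal ((n : ℝ) ^ (p - 1)) := by
    have hn' : (0 : ℝ) < n := by exact_mod_cast hn
    rw [← ENNReal.ofReal_natCast, ENNReal.ofReal_rpow_of_pos hn',
      ← ENNReal.ofReal_inv_of_pos (Real.rpow_pos_of_pos hn' _), ← Real.rpow_neg hn'.le, neg_sub]
  calc ∑ i ∈ range N, (((i + 1 : ℕ) : ℝ≥0∞) ^ (1 - p))⁻¹
      = ENNReal.ofReal (∑ i ∈ range N, ((i : ℝ) + 1) ^ (p - 1)) := by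
        rw [ENNReal.ofReal_sum_of_nonneg fun i _ => by positivity]
        refine sum_congr rfl fun i _ => ?_
        rw [hterm _ i.succ_pos]
        push_cast
        rfl
    _ ≤ ENNReal.ofReal ((N : ℝ) ^ p / p) :=
        ENNReal.ofReal_le_ofReal (Real.sum_range_add_one_rpow_sub_one_le hp0 hp1 N)
    _ = ENNReal.ofReal (1 / p) * (N : ℝ≥0∞) ^ p := by
        rw [div_eq_mul_one_div, mul_comm, ENNReal.ofReal_mul (by positivity),
          ← ENNReal.ofReal_natCast, ENNReal.ofReal_rpow_of_nonneg (Nat.cast_nonneg _) hp0.le]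

theorem ENNReal.div_natCast_le_div_rpow_mul (x : ℝ≥0∞) {p : ℝ} (hp : p ≤ 1) {n k : ℕ}
    (hn : 0 < n) (hnk : n ≤ k) :
    x / k ≤ x / (k : ℝ≥0∞) ^ p * ((n : ℝ≥0∞) ^ (1 - p))⁻¹ := by
  have hk0 : (k : ℝ≥0∞) ≠ 0 := by exact_mod_cast (hn.trans_le hnk).ne'
  have hsplit : (k : ℝ≥0∞) = (k : ℝ≥0∞) ^ p * (k : ℝ≥0∞) ^ (1 - p) := by
    rw [← ENNReal.rpow_add _ _ hk0 (ENNReal.natCast_ne_top k)]; norm_num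
  have hinv : ((k : ℝ≥0∞) ^ p * (k : ℝ≥0∞) ^ (1 - p))⁻¹ =
      ((k : ℝ≥0∞) ^ p)⁻¹ * ((k : ℝ≥0∞) ^ (1 - p))⁻¹ :=
    ENNReal.mul_inv
      (Or.inr (ENNReal.rpow_ne_top_of_nonneg (by linarith) (ENNReal.natCast_ne_top k)))
      (Or.inr (ENNReal.rpow_pos (pos_iff_ne_zero.2 hk0) (ENNReal.natCast_ne_top k)).ne')
  calc x / k = x / (k : ℝ≥0∞) ^ p * ((k : ℝ≥0∞) ^ (1 - p))⁻¹ := by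
        conv_lhs => rw [hsplit, div_eq_mul_inv, hinv, ← mul_assoc]
        rw [div_eq_mul_inv x]
    _ ≤ x / (k : ℝ≥0∞) ^ p * ((n : ℝ≥0∞) ^ (1 - p))⁻¹ := by
        gcongr

theorem iSup_div_card_le {ι : Type*} (W : Set (Finset ι)) (g : Finset ι → ℝ≥0∞) {p : ℝ}
    (hp : p ≤ 1) {n : ℕ} (hn : 0 < n) :
    ⨆ (e ∈ W) (_ : n ≤ e.card), g e / (e.card : ℝ≥0∞) ≤
      (⨆ e ∈ W, g e / (e.card : ℝ≥0∞) ^ p) * ((n : ℝ≥0∞) ^ (1 - p))⁻¹ := by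
  refine iSup₂_le fun e he => iSup_le fun hcard => ?_
  refine (ENNReal.div_natCast_le_div_rpow_mul (g e) hp hn hcard).trans ?_
  gcongr
  exact le_iSup₂ (f := fun e (_ : e ∈ W) => g e / (e.card : ℝ≥0∞) ^ p) e he

theorem gen_monotone_seq_general (r' : ℝ) (hr' : 1 < r')
    (lam : ℤ → ℂ) (C : ℝ) (hC : 0 < C)
    (hmono : ∀ n : ℕ, 1 ≤ n → srearr lam n ≤ ENNReal.ofReal C *
      ⨆ (e : Finset ℤ) (_ : e ∈ ZIntervals) (_ : n ≤ e.card),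
        ENNReal.ofReal ‖∑ j ∈ e, lam j‖ / (e.card : ℝ≥0∞)) :
    ∃ C'' : ℝ, 0 < C'' ∧
      ∀ e : Finset ℤ, e.Nonempty →
        ENNReal.ofReal ‖∑ m ∈ e, lam m‖ / (e.card : ℝ≥0∞) ^ (1 / r') ≤
          ENNReal.ofReal C'' *
            ⨆ (e' : Finset ℤ) (_ : e' ∈ ZIntervals),
              ENNReal.ofReal ‖∑ j ∈ e', lam j‖ / (e'.card : ℝ≥0∞) ^ (1 / r') := by
  set p := 1 / r'
  have hp0 : 0 < p := by positivity
  have hp1 : p ≤ 1 := (div_lt_one (by positivity)).2 hr' |>.le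
  set S := ⨆ (e' : Finset ℤ) (_ : e' ∈ ZIntervals),
    ENNReal.ofReal ‖∑ j ∈ e', lam j‖ / (e'.card : ℝ≥0∞) ^ p
  have hsrearr (i : ℕ) :
      srearr lam (i + 1) ≤ ENNReal.ofReal C * S * (((i + 1 : ℕ) : ℝ≥0∞) ^ (1 - p))⁻¹ := by
    rw [mul_assoc]
    exact (hmono (i + 1) i.succ_pos).trans
      (mul_le_mul_right (iSup_div_card_le ZIntervals _ hp1 i.succ_pos) _)
  refine ⟨C / p, by positivity, fun e he => ?_⟩
  have hcard : (e.card : ℝ≥0∞) ≠ 0 := by simpa using he.ne_empty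
  rw [ENNReal.div_le_iff (ENNReal.rpow_pos (pos_iff_ne_zero.2 hcard) (by simp)).ne'
    (ENNReal.rpow_ne_top_of_nonneg hp0.le (by simp))]
  calc ENNReal.ofReal ‖∑ m ∈ e, lam m‖ ≤ ∑ m ∈ e, ENNReal.ofReal ‖lam m‖ := by
        simp only [ofReal_norm]
        exact enorm_sum_le _ _
    _ ≤ ∑ i ∈ range e.card, srearr lam (i + 1) := sum_ofReal_norm_le_sum_srearr lam e
    _ ≤ ENNReal.ofReal C * S * ∑ i ∈ range e.card, (((i + 1 : ℕ) : ℝ≥0∞) ^ (1 - p))⁻¹ := by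
        rw [mul_sum]
        exact sum_le_sum fun i _ => hsrearr i
    _ ≤ ENNReal.ofReal C * S * (ENNReal.ofReal (1 / p) * (e.card : ℝ≥0∞) ^ p) := by
        gcongr
        exact ENNReal.sum_range_inv_rpow_le hp0 hp1 _
    _ = ENNReal.ofReal (C / p) * S * (e.card : ℝ≥0∞) ^ p := by
        rw [div_eq_mul_one_div C, ENNReal.ofReal_mul hC.le]
        ring

/-- if `λ` is a `W`-generalized monotone sequence, then for every finite
set `e ⊂ ℤ` (not necessarily an interval), `|e|^{-1/r'} |Σ_{m∈e} λ_m|` is controlled by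
`sup_{e'∈W} |e'|^{-1/r'} |Σ_{j∈e'} λ_j|`, with a constant depending only on `C` and `r`. -/
theorem gen_monotone_seq (r r' : ℝ) (hr' : 1 < r') (hrr' : 1 / r + 1 / r' = 1)
    (lam : ℤ → ℂ) (C : ℝ) (hC : 0 < C)
    (hmono : ∀ n : ℕ, 1 ≤ n → srearr lam n ≤ ENNReal.ofReal C *
      ⨆ (e : Finset ℤ) (_ : e ∈ ZIntervals) (_ : n ≤ e.card),
        ENNReal.ofReal ‖∑ j ∈ e, lam j‖ / (e.card : ℝ≥0∞)) :
    ∃ C'' : ℝ, 0 < C'' ∧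
      ∀ e : Finset ℤ, e.Nonempty →
        ENNReal.ofReal ‖∑ m ∈ e, lam m‖ / (e.card : ℝ≥0∞) ^ (1 / r') ≤
          ENNReal.ofReal C'' *
            ⨆ (e' : Finset ℤ) (_ : e' ∈ ZIntervals),
              ENNReal.ofReal ‖∑ j ∈ e', lam j‖ / (e'.card : ℝ≥0∞) ^ (1 / r') :=
  gen_monotone_seq_general r' hr' lam C hC hmono
end

section
/- Let 1 < r < ∞, 0 < α < 1, and let λ : ℝ → ℝ be the even function with λ(x) = (2-x)^α for 0 ≤ x ≤ 2 and λ(x) = 0 for x > 2. Then λ is absolutely continuous on [0,∞), λ(ξ) → 0 as |ξ| → ∞, the quantity sup_{ξ} |ξ|^{1/r+1}|λ'(ξ)| is infinite, but sup_{k∈ℤ} 2^{k/r} ∫_{Δ_k} |λ'(ξ)| dξ < ∞, where Δ_k = (-2^{k+1},-2^k] ∪ [2^k,2^{k+1}). -/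
/-!
On `(0, 2)` we have `λ' ξ = -α (2 - ξ)^(α - 1)`: integrable because `α > 0`, unbounded near `2`
because `α < 1`, and near `2` the weight `|ξ|^(1/r + 1)` is at least `1`, so the pointwise
Lizorkin quantity is infinite. Since `λ` is continuous and smooth off `2`, `λ b - λ a` is the
integral of `λ'` over `[a, b]`, and absolute continuity is that of the Lebesgue integral of
`λ' ∈ L¹`. As `λ'` vanishes for `|ξ| > 2`, only the annuli with `k ≤ 0` carry mass, and there
`2^(k/r) ≤ 1`, so `‖λ'‖₁` bounds the dyadic supremum.
-/

open MeasureTheory Set Filter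

/-- Absolute continuity of `f` on a set `s ⊆ ℝ` (ε–δ definition with finitely many
non-overlapping subintervals with endpoints in `s`). -/
def ACOn (f : ℝ → ℝ) (s : Set ℝ) : Prop :=
  ∀ ε > (0 : ℝ), ∃ δ > (0 : ℝ), ∀ n : ℕ, ∀ a b : ℕ → ℝ,
    (∀ i < n, a i ∈ s ∧ b i ∈ s ∧ a i ≤ b i) →
    (∀ i < n, ∀ j < n, i ≠ j → Disjoint (Ioo (a i) (b i)) (Ioo (a j) (b j))) →
    (∑ i ∈ Finset.range n, (b i - a i)) < δ →
    (∑ i ∈ Finset.range n, |f (b i) - f (a i)|) < ε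

/-- The dyadic annulus `Δ_k = (-2^{k+1}, -2^k] ∪ [2^k, 2^{k+1})`. -/
def DyadicAnnulus (k : ℤ) : Set ℝ :=
  Ioc (-(2 : ℝ) ^ (k + 1)) (-(2 : ℝ) ^ k) ∪ Ico ((2 : ℝ) ^ k) ((2 : ℝ) ^ (k + 1))

open Topology

theorem acOn_of_sub_eq_intervalIntegral {f g : ℝ → ℝ} {s : Set ℝ} (hg : Integrable g)
    (hfg : ∀ a ∈ s, ∀ b ∈ s, a ≤ b → f b - f a = ∫ x in a..b, g x) : ACOn f s := by
  intro ε hε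
  obtain ⟨δ, hδ, hsmall⟩ := exists_pos_setLIntegral_lt_of_measure_lt (μ := volume)
    hg.hasFiniteIntegral.ne (ENNReal.ofReal_pos.2 hε).ne'
  obtain ⟨η, -, hη, hηδ⟩ := ENNReal.lt_iff_exists_real_btwn.1 hδ
  refine ⟨η, ENNReal.ofReal_pos.1 hη, fun n a b hab hdisj hsum => ?_⟩
  set U := ⋃ i ∈ Finset.range n, Ioo (a i) (b i)
  have hle : ∀ i ∈ Finset.range n, a i ≤ b i := fun i hi => (hab i (Finset.mem_range.1 hi)).2.2
  have hU : volume U < δ := calc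
    volume U ≤ ∑ i ∈ Finset.range n, volume (Ioo (a i) (b i)) := measure_biUnion_finset_le _ _
    _ = ENNReal.ofReal (∑ i ∈ Finset.range n, (b i - a i)) := by
      rw [ENNReal.ofReal_sum_of_nonneg fun i hi => sub_nonneg.2 (hle i hi)]
      simp only [Real.volume_Ioo]
    _ ≤ ENNReal.ofReal η := ENNReal.ofReal_le_ofReal hsum.le
    _ < δ := hηδ
  have hpiece : ∀ i ∈ Finset.range n, |f (b i) - f (a i)| ≤ ∫ x in Ioo (a i) (b i), ‖g x‖ := by
    intro i hi
    obtain ⟨ha, hb, hab⟩ := hab i (Finset.mem_range.1 hi)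
    rw [hfg _ ha _ hb hab, ← integral_Ioc_eq_integral_Ioo, ← intervalIntegral.integral_of_le hab,
      ← Real.norm_eq_abs]
    exact intervalIntegral.norm_integral_le_integral_norm hab
  have hdisj' : PairwiseDisjoint (Finset.range n : Set ℕ) fun i => Ioo (a i) (b i) :=
    fun i hi j hj hij => hdisj i (Finset.mem_range.1 hi) j (Finset.mem_range.1 hj) hij
  calc ∑ i ∈ Finset.range n, |f (b i) - f (a i)|
      ≤ ∑ i ∈ Finset.range n, ∫ x in Ioo (a i) (b i), ‖g x‖ := Finset.sum_le_sum hpiece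
    _ = ∫ x in U, ‖g x‖ := (integral_biUnion_finset _ (fun _ _ => measurableSet_Ioo) hdisj'
        fun _ _ => hg.norm.integrableOn).symm
    _ < ε := by
      rw [← ENNReal.ofReal_lt_ofReal_iff hε,
        ofReal_integral_norm_eq_lintegral_enorm hg.integrableOn]
      exact hsmall U hU

theorem integrable_of_integrableOn_Ioi_of_odd {E : Type*} [NormedAddCommGroup E] {g : ℝ → E}
    (hodd : ∀ x, g (-x) = -g x) (hg : IntegrableOn g (Ioi 0)) : Integrable g := by
  rw [← integrableOn_univ, ← Iio_union_Ici (a := (0 : ℝ)), integrableOn_union,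
    integrableOn_Ici_iff_integrableOn_Ioi]
  refine ⟨?_, hg⟩
  rw [← (Measure.measurePreserving_neg (volume : Measure ℝ)).integrableOn_comp_preimage
    (Homeomorph.neg ℝ).measurableEmbedding]
  simp only [Function.comp_def, hodd, neg_preimage, neg_Iio, neg_zero]
  exact hg.neg

theorem two_zpow_le_abs_of_mem_dyadicAnnulus {k : ℤ} {ξ : ℝ} (hξ : ξ ∈ DyadicAnnulus k) :
    (2 : ℝ) ^ k ≤ |ξ| := by
  rcases hξ with h | h
  · exact (le_neg.2 h.2).trans (neg_le_abs ξ)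
  · exact h.1.trans (le_abs_self ξ)

theorem rpow_div_mul_setIntegral_dyadicAnnulus_le_integral {g : ℝ → ℝ} {r : ℝ} (hr : 0 ≤ r)
    (hg : Integrable g) (hvan : ∀ᵐ x, 2 ≤ |x| → g x = 0) (k : ℤ) :
    (2 : ℝ) ^ ((k : ℝ) / r) * ∫ ξ in DyadicAnnulus k, |g ξ| ≤ ∫ ξ, |g ξ| := by
  rcases le_or_gt k 0 with hk | hk
  · have hpow : (2 : ℝ) ^ ((k : ℝ) / r) ≤ 1 :=
      Real.rpow_le_one_of_one_le_of_nonpos one_le_two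
        (div_nonpos_of_nonpos_of_nonneg (Int.cast_nonpos.2 hk) hr)
    calc (2 : ℝ) ^ ((k : ℝ) / r) * ∫ ξ in DyadicAnnulus k, |g ξ|
        ≤ ∫ ξ in DyadicAnnulus k, |g ξ| :=
          mul_le_of_le_one_left (integral_nonneg fun _ => abs_nonneg _) hpow
      _ ≤ ∫ ξ, |g ξ| := setIntegral_le_integral hg.abs (.of_forall fun _ => abs_nonneg _)
  · have hzero : ∫ ξ in DyadicAnnulus k, |g ξ| = 0 := by
      refine setIntegral_eq_zero_of_ae_eq_zero (hvan.mono fun ξ hξ hmem => ?_)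
      have h2k : (2 : ℝ) ≤ 2 ^ k := by
        simpa using zpow_le_zpow_right₀ (one_le_two : (1 : ℝ) ≤ 2) (show 1 ≤ k by omega)
      rw [hξ (h2k.trans (two_zpow_le_abs_of_mem_dyadicAnnulus hmem)), abs_zero]
    rw [hzero, mul_zero]
    exact integral_nonneg fun _ => abs_nonneg _

section Tent

variable {α : ℝ} {lam : ℝ → ℝ}

theorem tent_hasDerivAt (hval : ∀ x : ℝ, 0 ≤ x → x ≤ 2 → lam x = (2 - x) ^ α) {ξ : ℝ}
    (hξ : ξ ∈ Ioo (0 : ℝ) 2) : HasDerivAt lam (-(α * (2 - ξ) ^ (α - 1))) ξ := by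
  have hpow : HasDerivAt (fun x : ℝ => (2 - x) ^ α) (-1 * α * (2 - ξ) ^ (α - 1)) ξ :=
    ((hasDerivAt_id ξ).const_sub 2).rpow_const (Or.inl (sub_pos.2 hξ.2).ne')
  have heq : (fun x : ℝ => (2 - x) ^ α) =ᶠ[𝓝 ξ] lam := by
    filter_upwards [isOpen_Ioo.mem_nhds hξ] with x hx using (hval x hx.1.le hx.2.le).symm
  exact (hpow.congr_of_eventuallyEq heq.symm).congr_deriv (by ring)

theorem tent_hasDerivAt_of_two_lt (hzero : ∀ x : ℝ, 2 < x → lam x = 0) {ξ : ℝ} (hξ : 2 < ξ) :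
    HasDerivAt lam 0 ξ :=
  (hasDerivAt_const ξ (0 : ℝ)).congr_of_eventuallyEq
    (eventually_gt_nhds hξ |>.mono fun x hx => hzero x hx)

theorem tent_deriv_neg (heven : ∀ x : ℝ, lam (-x) = lam x) (x : ℝ) :
    deriv lam (-x) = -deriv lam x := by
  calc deriv lam (-x) = deriv (fun y => lam (-y)) (-x) := by simp only [heven]
    _ = -deriv lam x := by rw [deriv_comp_neg, neg_neg]

theorem tent_continuousOn (hα0 : 0 < α) (hval : ∀ x : ℝ, 0 ≤ x → x ≤ 2 → lam x = (2 - x) ^ α)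
    (hzero : ∀ x : ℝ, 2 < x → lam x = 0) : ContinuousOn lam (Ici 0) := by
  have hc : Continuous fun x : ℝ => max (2 - x) 0 ^ α :=
    ((continuous_const.sub continuous_id).max continuous_const).rpow_const
      fun _ => Or.inr hα0.le
  refine hc.continuousOn.congr fun x hx => ?_
  dsimp only
  rcases le_or_gt x 2 with h | h
  · rw [hval x hx h, max_eq_left (sub_nonneg.2 h)]
  · rw [hzero x h, max_eq_right (by linarith : 2 - x ≤ 0), Real.zero_rpow hα0.ne']

theorem tent_integrableOn_deriv_Ioi (hα0 : 0 < α)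
    (hval : ∀ x : ℝ, 0 ≤ x → x ≤ 2 → lam x = (2 - x) ^ α)
    (hzero : ∀ x : ℝ, 2 < x → lam x = 0) : IntegrableOn (deriv lam) (Ioi 0) := by
  rw [← Ioc_union_Ioi_eq_Ioi zero_le_two, integrableOn_union]
  constructor
  · have hrpow : IntervalIntegrable (fun x : ℝ => α * (2 - x) ^ (α - 1)) volume 0 2 := by
      simpa using ((intervalIntegral.intervalIntegrable_rpow' (r := α - 1) (a := 0) (b := 2)
        (by linarith)).comp_sub_left 2).symm.const_mul α
    rw [integrableOn_Ioc_iff_integrableOn_Ioo]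
    refine ((intervalIntegrable_iff_integrableOn_Ioo_of_le zero_le_two).1 hrpow).neg.congr_fun
      (fun ξ hξ => (tent_hasDerivAt hval hξ).deriv.symm) measurableSet_Ioo
  · exact integrableOn_zero.congr_fun
      (fun ξ hξ => (tent_hasDerivAt_of_two_lt hzero hξ).deriv.symm) measurableSet_Ioi

theorem tent_integrable_deriv (hα0 : 0 < α) (heven : ∀ x : ℝ, lam (-x) = lam x)
    (hval : ∀ x : ℝ, 0 ≤ x → x ≤ 2 → lam x = (2 - x) ^ α)
    (hzero : ∀ x : ℝ, 2 < x → lam x = 0) : Integrable (deriv lam) :=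
  integrable_of_integrableOn_Ioi_of_odd (tent_deriv_neg heven)
    (tent_integrableOn_deriv_Ioi hα0 hval hzero)

theorem tent_sub_eq_integral_deriv (hα0 : 0 < α) (heven : ∀ x : ℝ, lam (-x) = lam x)
    (hval : ∀ x : ℝ, 0 ≤ x → x ≤ 2 → lam x = (2 - x) ^ α)
    (hzero : ∀ x : ℝ, 2 < x → lam x = 0) :
    ∀ a ∈ Ici (0 : ℝ), ∀ b ∈ Ici (0 : ℝ), a ≤ b → lam b - lam a = ∫ x in a..b, deriv lam x := by
  intro a ha b _ hab
  -- `λ` is not differentiable at `2`, which the countable exceptional set absorbs.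
  refine (integral_eq_of_hasDerivAt_off_countable_of_le lam (deriv lam) hab
    (countable_singleton 2) ((tent_continuousOn hα0 hval hzero).mono fun x hx => ha.trans hx.1)
    (fun x hx => ?_) (tent_integrable_deriv hα0 heven hval hzero).intervalIntegrable).symm
  obtain ⟨hx, hx2⟩ := hx
  rcases lt_or_gt_of_ne (hx2 : x ≠ 2) with h | h
  · exact (tent_hasDerivAt hval ⟨lt_of_le_of_lt ha hx.1, h⟩).differentiableAt.hasDerivAt
  · exact (tent_hasDerivAt_of_two_lt hzero h).differentiableAt.hasDerivAt

theorem tent_tendsto_cocompact (heven : ∀ x : ℝ, lam (-x) = lam x)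
    (hzero : ∀ x : ℝ, 2 < x → lam x = 0) : Tendsto lam (cocompact ℝ) (𝓝 0) := by
  have hatTop : lam =ᶠ[atTop] fun _ => 0 := (eventually_gt_atTop 2).mono hzero
  have hatBot : lam =ᶠ[atBot] fun _ => 0 := (eventually_lt_atBot (-2)).mono fun x hx => by
    rw [← heven, hzero _ (by linarith)]
  rw [cocompact_eq_atBot_atTop, tendsto_sup]
  exact ⟨tendsto_const_nhds.congr' hatBot.symm, tendsto_const_nhds.congr' hatTop.symm⟩

theorem tent_tendsto_abs_deriv (hα0 : 0 < α) (hα1 : α < 1)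
    (hval : ∀ x : ℝ, 0 ≤ x → x ≤ 2 → lam x = (2 - x) ^ α) :
    Tendsto (fun ξ => |deriv lam ξ|) (𝓝[<] 2) atTop := by
  have hcont : Tendsto (fun ξ : ℝ => 2 - ξ) (𝓝[<] 2) (𝓝 0) := by
    simpa using ((continuous_sub_left (2 : ℝ)).tendsto 2).mono_left nhdsWithin_le_nhds
  have hsub : Tendsto (fun ξ : ℝ => 2 - ξ) (𝓝[<] 2) (𝓝[>] 0) :=
    tendsto_nhdsWithin_of_tendsto_nhds_of_eventually_within _ hcont
      (eventually_nhdsWithin_of_forall fun _ hx => mem_Ioi.2 (sub_pos.2 hx))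
  have hblow : Tendsto (fun ξ => α * (2 - ξ) ^ (α - 1)) (𝓝[<] 2) atTop :=
    ((tendsto_rpow_neg_nhdsGT_zero (by linarith)).comp hsub).const_mul_atTop hα0
  refine hblow.congr' ?_
  filter_upwards [Ioo_mem_nhdsLT two_pos] with ξ hξ
  have hpos : 0 < 2 - ξ := sub_pos.2 hξ.2
  rw [(tent_hasDerivAt hval hξ).deriv, abs_neg, abs_of_pos (by positivity)]

theorem tent_not_exists_bound_rpow_mul_abs_deriv {p : ℝ} (hp : 0 ≤ p) (hα0 : 0 < α) (hα1 : α < 1)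
    (hval : ∀ x : ℝ, 0 ≤ x → x ≤ 2 → lam x = (2 - x) ^ α) :
    ¬ ∃ B : ℝ, ∀ ξ ∈ Ioo (0 : ℝ) 2, |ξ| ^ p * |deriv lam ξ| ≤ B := by
  rintro ⟨B, hB⟩
  have hnear : ∀ᶠ ξ in 𝓝[<] 2, ξ ∈ Ioo (1 : ℝ) 2 :=
    eventually_mem_set.2 (Ioo_mem_nhdsLT one_lt_two)
  obtain ⟨ξ, hξ, hbig⟩ :=
    (hnear.and ((tent_tendsto_abs_deriv hα0 hα1 hval).eventually_gt_atTop B)).exists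
  have hone : 1 ≤ |ξ| ^ p := Real.one_le_rpow (hξ.1.le.trans (le_abs_self ξ)) hp
  refine lt_irrefl B ?_
  calc B < |deriv lam ξ| := hbig
    _ ≤ |ξ| ^ p * |deriv lam ξ| := le_mul_of_one_le_left (abs_nonneg _) hone
    _ ≤ B := hB ξ ⟨one_pos.trans hξ.1, hξ.2⟩

theorem tent_deriv_ae_eq_zero (heven : ∀ x : ℝ, lam (-x) = lam x)
    (hzero : ∀ x : ℝ, 2 < x → lam x = 0) : ∀ᵐ x, 2 ≤ |x| → deriv lam x = 0 := by
  have hright : ∀ x, 2 < x → deriv lam x = 0 := fun x hx =>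
    (tent_hasDerivAt_of_two_lt hzero hx).deriv
  -- `deriv lam (±2)` is a junk value, hence only almost everywhere.
  filter_upwards [(Set.toFinite {(2 : ℝ), -2}).countable.ae_notMem volume] with x hx h2
  simp only [mem_insert_iff, mem_singleton_iff, not_or] at hx
  rcases le_abs'.1 h2 with h | h
  · rw [← neg_neg x, tent_deriv_neg heven, hright (-x) (by grind), neg_zero]
  · exact hright x (lt_of_le_of_ne h (Ne.symm hx.1))

end Tent

/-- the even function `λ(x) = (2-x)^α` on `[0,2]`, `0` for `x > 2`
(with `0 < α < 1`) is absolutely continuous on `[0,∞)`, tends to `0` at infinity, fails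
the pointwise Lizorkin condition `sup |ξ|^{1/r+1}|λ'(ξ)| < ∞`, yet satisfies the dyadic
condition `sup_k 2^{k/r} ∫_{Δ_k} |λ'| < ∞`. -/
theorem example_lizorkin_fails_dyadic_holds (r α : ℝ) (hr : 1 < r)
    (hα0 : 0 < α) (hα1 : α < 1) (lam : ℝ → ℝ)
    (heven : ∀ x : ℝ, lam (-x) = lam x)
    (hval : ∀ x : ℝ, 0 ≤ x → x ≤ 2 → lam x = (2 - x) ^ α)
    (hzero : ∀ x : ℝ, 2 < x → lam x = 0) :
    ACOn lam (Ici 0) ∧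
      Tendsto lam (cocompact ℝ) (nhds 0) ∧
      (¬ ∃ B : ℝ, ∀ ξ ∈ Ioo (0 : ℝ) 2, |ξ| ^ (1 / r + 1) * |deriv lam ξ| ≤ B) ∧
      ∃ A : ℝ, ∀ k : ℤ, (2 : ℝ) ^ ((k : ℝ) / r) * ∫ ξ in DyadicAnnulus k, |deriv lam ξ| ≤ A := by
  have hr0 : 0 < r := by linarith
  have hint := tent_integrable_deriv hα0 heven hval hzero
  exact ⟨acOn_of_sub_eq_intervalIntegral hint (tent_sub_eq_integral_deriv hα0 heven hval hzero),
    tent_tendsto_cocompact heven hzero,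
    tent_not_exists_bound_rpow_mul_abs_deriv (by positivity) hα0 hα1 hval, ∫ ξ, |deriv lam ξ|,
    rpow_div_mul_setIntegral_dyadicAnnulus_le_integral hr0.le hint
      (tent_deriv_ae_eq_zero heven hzero)⟩
end

section
/- Let 1 < r < ∞ and define γ := Σ_{j=0}^∞ 2^{-j/r} and the sequence λ_0 = γ, λ_m = γ - Σ_{j=0}^{k} 2^{-j/r} for 2^k ≤ m ≤ 2^{k+1}-1 (k ∈ ℕ₀), extended evenly to negative indices. Then: (a) λ_m → 0 as m → ∞; (b) for every k ∈ ℕ₀, 2^{k/r} Σ_{m=2^k}^{2^{k+1}-1} |λ_m - λ_{m-1}| = 1; (c) the sequence (2^k - 1)^{1/r+1} |λ_{2^k - 1} - λ_{2^k}| = ((2^k-1)/2^k)^{1/r} (2^k - 1) is unbounded in k. -/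
open Filter

/-!
On the `k`-th dyadic block the sequence is the tail `γ - ∑_{j ≤ k} a_j` of the convergent
series `γ = ∑ a_j`, `a_j = 2^{-j/r}`. Hence it tends to `0` and jumps only at the left end
`m = 2^k` of a block, by exactly `a_k`, so the scaled block variation is `2^{k/r} a_k = 1`,
whereas `(2^k - 1)^{1/r+1} a_k` grows like `2^k`.
-/

open Finset

theorem two_pow_le_two_pow_succ_sub_one (k : ℕ) : (2 : ℤ) ^ k ≤ 2 ^ (k + 1) - 1 := by
  have : (1 : ℤ) ≤ 2 ^ k := one_le_pow₀ one_le_two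
  rw [pow_succ]
  linarith

def EqTailOnDyadicBlocks (a : ℕ → ℝ) (γ : ℝ) (lam : ℤ → ℝ) : Prop :=
  ∀ k : ℕ, ∀ m : ℤ, (2 : ℤ) ^ k ≤ m → m ≤ 2 ^ (k + 1) - 1 →
    lam m = γ - ∑ j ∈ range (k + 1), a j

namespace EqTailOnDyadicBlocks

variable {a : ℕ → ℝ} {γ : ℝ} {lam : ℤ → ℝ}

theorem apply_natCast (h : EqTailOnDyadicBlocks a γ lam) {m : ℕ} (hm : m ≠ 0) :
    lam m = γ - ∑ j ∈ range (Nat.log 2 m + 1), a j := by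
  have hlow : 2 ^ Nat.log 2 m ≤ m := Nat.pow_log_le_self 2 hm
  have hupp : (m : ℤ) < 2 ^ (Nat.log 2 m + 1) := by
    exact_mod_cast Nat.lt_pow_succ_log_self one_lt_two m
  exact h _ m (by exact_mod_cast hlow) (by omega)

theorem tendsto_zero (h : EqTailOnDyadicBlocks a γ lam) (ha : HasSum a γ) :
    Tendsto (fun m : ℕ => lam m) atTop (nhds 0) := by
  have htail : Tendsto (fun k => γ - ∑ j ∈ range (k + 1), a j) atTop (nhds 0) := by
    simpa using ((ha.tendsto_sum_nat.comp (tendsto_add_atTop_nat 1)).const_sub γ)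
  have hlog : Tendsto (Nat.log 2) atTop atTop :=
    tendsto_atTop_atTop.2 fun N => ⟨2 ^ N, fun m hm =>
      Nat.le_log_of_pow_le one_lt_two hm⟩
  refine (htail.comp hlog).congr' ?_
  filter_upwards [eventually_ne_atTop 0] with m hm
  exact (h.apply_natCast hm).symm

theorem sub_apply_two_pow (h : EqTailOnDyadicBlocks a γ lam) (h0 : lam 0 = γ) (k : ℕ) :
    lam (2 ^ k - 1) - lam (2 ^ k) = a k := by
  rw [h k (2 ^ k) le_rfl (two_pow_le_two_pow_succ_sub_one k)]
  cases k with
  | zero => simp [h0]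
  | succ k =>
    rw [h k _ (two_pow_le_two_pow_succ_sub_one k) le_rfl, sum_range_succ _ (k + 1)]
    ring

theorem sum_abs_sub_apply_sub_one (h : EqTailOnDyadicBlocks a γ lam) (h0 : lam 0 = γ)
    (k : ℕ) :
    ∑ m ∈ Icc ((2 : ℤ) ^ k) (2 ^ (k + 1) - 1), |lam m - lam (m - 1)| = |a k| := by
  rw [sum_eq_single_of_mem _ (mem_Icc.2 ⟨le_rfl, two_pow_le_two_pow_succ_sub_one k⟩),
    abs_sub_comm, h.sub_apply_two_pow h0]
  intro m hm hne
  rw [mem_Icc] at hm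
  rw [h k m hm.1 hm.2, h k (m - 1) (by omega) (by omega), sub_self, abs_zero]

end EqTailOnDyadicBlocks

theorem summable_two_rpow_neg_div {r : ℝ} (hr : 0 < r) :
    Summable fun j : ℕ => (2 : ℝ) ^ (-(j : ℝ) / r) := by
  have hq : (2 : ℝ) ^ (-1 / r) < 1 :=
    Real.rpow_lt_one_of_one_lt_of_neg one_lt_two (div_neg_of_neg_of_pos (by norm_num) hr)
  refine (summable_geometric_of_lt_one (by positivity) hq).congr fun j => ?_
  rw [← Real.rpow_natCast, ← Real.rpow_mul zero_le_two]
  ring_nf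

theorem Real.rpow_add_one_mul_rpow_neg {x y s : ℝ} (hx : 0 ≤ x) (hy : 0 ≤ y)
    (hs : s + 1 ≠ 0) : x ^ (s + 1) * y ^ (-s) = (x / y) ^ s * x := by
  rw [Real.rpow_add_one' hx hs, Real.rpow_neg hy, Real.div_rpow hx hy]
  ring

theorem tendsto_rpow_one_sub_inv_two_pow_mul_atTop (s : ℝ) :
    Tendsto (fun k : ℕ => (((2 : ℝ) ^ k - 1) / 2 ^ k) ^ s * ((2 : ℝ) ^ k - 1))
      atTop atTop := by
  have hratio : Tendsto (fun k : ℕ => ((2 : ℝ) ^ k - 1) / 2 ^ k) atTop (nhds 1) := by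
    have h := (tendsto_inv_atTop_zero.comp
      (tendsto_pow_atTop_atTop_of_one_lt one_lt_two)).const_sub (1 : ℝ)
    rw [sub_zero] at h
    refine h.congr fun k => ?_
    simp [sub_div]
  have hpow := hratio.rpow_const (p := s) (Or.inl one_ne_zero)
  rw [Real.one_rpow] at hpow
  exact hpow.pos_mul_atTop one_pos
    (tendsto_atTop_add_const_right _ _ (tendsto_pow_atTop_atTop_of_one_lt one_lt_two))

theorem example_dyadic_variation_general (r : ℝ) (hr : 1 < r) (γ : ℝ)
    (hγ : γ = ∑' j : ℕ, (2 : ℝ) ^ (-(j : ℝ) / r))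
    (lam : ℤ → ℝ) (h0 : lam 0 = γ)
    (hblock : ∀ k : ℕ, ∀ m : ℤ, (2 : ℤ) ^ k ≤ m → m ≤ 2 ^ (k + 1) - 1 →
      lam m = γ - ∑ j ∈ Finset.range (k + 1), (2 : ℝ) ^ (-(j : ℝ) / r)) :
    Tendsto (fun m : ℕ => lam m) atTop (nhds 0) ∧
      (∀ k : ℕ, (2 : ℝ) ^ ((k : ℝ) / r) *
          ∑ m ∈ Finset.Icc ((2 : ℤ) ^ k) (2 ^ (k + 1) - 1), |lam m - lam (m - 1)| = 1) ∧
      (∀ k : ℕ, ((2 : ℝ) ^ k - 1) ^ (1 / r + 1) * |lam (2 ^ k - 1) - lam (2 ^ k)| =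
          (((2 : ℝ) ^ k - 1) / 2 ^ k) ^ (1 / r) * ((2 : ℝ) ^ k - 1)) ∧
      ¬ ∃ B : ℝ, ∀ k : ℕ,
          ((2 : ℝ) ^ k - 1) ^ (1 / r + 1) * |lam (2 ^ k - 1) - lam (2 ^ k)| ≤ B := by
  have hr0 : 0 < r := zero_lt_one.trans hr
  have hblock : EqTailOnDyadicBlocks _ γ lam := hblock
  have hjump (k : ℕ) : |lam (2 ^ k - 1) - lam (2 ^ k)| = ((2 : ℝ) ^ k) ^ (-(1 / r)) := by
    rw [hblock.sub_apply_two_pow h0, abs_of_pos (by positivity), ← Real.rpow_natCast,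
      ← Real.rpow_mul zero_le_two]
    ring_nf
  have hc (k : ℕ) : ((2 : ℝ) ^ k - 1) ^ (1 / r + 1) * |lam (2 ^ k - 1) - lam (2 ^ k)| =
      (((2 : ℝ) ^ k - 1) / 2 ^ k) ^ (1 / r) * ((2 : ℝ) ^ k - 1) := by
    rw [hjump, Real.rpow_add_one_mul_rpow_neg (by simp [one_le_pow₀]) (by positivity)
      (by positivity)]
  refine ⟨hblock.tendsto_zero (hγ ▸ (summable_two_rpow_neg_div hr0).hasSum), fun k => ?_,
    hc, ?_⟩
  · rw [hblock.sum_abs_sub_apply_sub_one h0, abs_of_pos (by positivity),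
      ← Real.rpow_add zero_lt_two, ← add_div, add_neg_cancel, zero_div, Real.rpow_zero]
  · rintro ⟨B, hB⟩
    obtain ⟨k, hk⟩ := ((tendsto_rpow_one_sub_inv_two_pow_mul_atTop (1 / r)).eventually_gt_atTop
      B).exists
    exact (hc k ▸ hB k).not_gt hk

/-- for `γ = Σ_{j≥0} 2^{-j/r}` and the sequence which equals
`γ - Σ_{j=0}^k 2^{-j/r}` on the dyadic block `{2^k, ..., 2^{k+1}-1}` (extended evenly):
(a) `λ_m → 0`; (b) `2^{k/r} Σ_{m=2^k}^{2^{k+1}-1} |λ_m - λ_{m-1}| = 1` for every `k`;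
(c) `(2^k-1)^{1/r+1} |λ_{2^k-1} - λ_{2^k}| = ((2^k-1)/2^k)^{1/r} (2^k-1)`, which is
unbounded in `k`. -/
theorem example_dyadic_variation (r : ℝ) (hr : 1 < r) (γ : ℝ)
    (hγ : γ = ∑' j : ℕ, (2 : ℝ) ^ (-(j : ℝ) / r))
    (lam : ℤ → ℝ) (h0 : lam 0 = γ)
    (hblock : ∀ k : ℕ, ∀ m : ℤ, (2 : ℤ) ^ k ≤ m → m ≤ 2 ^ (k + 1) - 1 →
      lam m = γ - ∑ j ∈ Finset.range (k + 1), (2 : ℝ) ^ (-(j : ℝ) / r))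
    (heven : ∀ m : ℤ, lam (-m) = lam m) :
    Tendsto (fun m : ℕ => lam m) atTop (nhds 0) ∧
      (∀ k : ℕ, (2 : ℝ) ^ ((k : ℝ) / r) *
          ∑ m ∈ Finset.Icc ((2 : ℤ) ^ k) (2 ^ (k + 1) - 1), |lam m - lam (m - 1)| = 1) ∧
      (∀ k : ℕ, ((2 : ℝ) ^ k - 1) ^ (1 / r + 1) * |lam (2 ^ k - 1) - lam (2 ^ k)| =
          (((2 : ℝ) ^ k - 1) / 2 ^ k) ^ (1 / r) * ((2 : ℝ) ^ k - 1)) ∧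
      ¬ ∃ B : ℝ, ∀ k : ℕ,
          ((2 : ℝ) ^ k - 1) ^ (1 / r + 1) * |lam (2 ^ k - 1) - lam (2 ^ k)| ≤ B :=
  example_dyadic_variation_general r hr γ hγ lam h0 hblock
end
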